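/- For any secure aggregation scheme for (F, G) in which F has no zero columns, the conditional entropy of the message tuple given the input satisfies H[(X_1, …, X_K) | W] ≥ (rank([F; G]) − rank(F)) · L · log q. -/

import Mathlib

/-!
Shannon entropy machinery for finitely-supported random variables on a finite
probability space, and the definition of a vector-linear secure aggregation
scheme (Yuan–Sun, "Vector Linear Secure Aggregation").
-/

open scoped BigOperators Classical

namespace SecAgg

noncomputable section

variable {Ω : Type*} [Fintype Ω]

/-- Probability that the random variable `X` takes the value `a`, under the
probability mass function `p` on the finite sample space `Ω`. -/
def pr {α : Type*} (p : Ω → ℝ) (X : Ω → α) (a : α) : ℝ :=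
  ∑ ω, if X ω = a then p ω else 0

/-- Shannon entropy (natural-log units) of a random variable `X` on a finite
probability space with mass function `p`. -/
def H {α : Type*} (p : Ω → ℝ) (X : Ω → α) : ℝ :=
  ∑ a ∈ Finset.univ.image X, Real.negMulLog (pr p X a)

/-- Conditional Shannon entropy `H[X | Y] = H[(X,Y)] - H[Y]`. -/
def Hc {α β : Type*} (p : Ω → ℝ) (X : Ω → α) (Y : Ω → β) : ℝ :=
  H p (fun ω => (X ω, Y ω)) - H p Y

/-- Mutual information `I[X : Y] = H[X] + H[Y] - H[(X,Y)]`. -/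
def MI {α β : Type*} (p : Ω → ℝ) (X : Ω → α) (Y : Ω → β) : ℝ :=
  H p X + H p Y - H p (fun ω => (X ω, Y ω))

/-- Conditional mutual information
`I[X : Y | Z] = H[(X,Z)] + H[(Y,Z)] - H[(X,Y,Z)] - H[Z]`. -/
def CMI {α β γ : Type*} (p : Ω → ℝ) (X : Ω → α) (Y : Ω → β) (Z : Ω → γ) : ℝ :=
  H p (fun ω => (X ω, Z ω)) + H p (fun ω => (Y ω, Z ω))
    - H p (fun ω => (X ω, Y ω, Z ω)) - H p Z

/-- A secure aggregation scheme for the pair of linear maps `(F, G)`: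
`K` users, inputs of length `L` over the finite field `𝔽`; the server must
learn `F * W` and nothing more about `G * W`.  `κ k` is the alphabet of
user `k`'s key, `σ` the alphabet of the source key, `χ k` the alphabet of
user `k`'s message. -/
structure Scheme (𝔽 : Type) [Field 𝔽] [Fintype 𝔽] (L : ℕ) {K M N : ℕ}
    (F : Matrix (Fin M) (Fin K) 𝔽) (G : Matrix (Fin N) (Fin K) 𝔽)
    (Ω : Type) [Fintype Ω] (κ : Fin K → Type) (σ : Type) (χ : Fin K → Type) where
  /-- probability mass function on the sample space -/
  p : Ω → ℝ
  p_nonneg : ∀ ω, 0 ≤ p ω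
  p_sum_one : ∑ ω, p ω = 1
  /-- the input, a `K × L` matrix of field elements (row `k` is user `k`'s input) -/
  W : Ω → Matrix (Fin K) (Fin L) 𝔽
  /-- user `k`'s key -/
  Z : ∀ k : Fin K, Ω → κ k
  /-- the source key -/
  Zsrc : Ω → σ
  /-- user `k`'s message -/
  X : ∀ k : Fin K, Ω → χ k
  /-- the input is uniformly distributed -/
  W_unif : ∀ w : Matrix (Fin K) (Fin L) 𝔽,
    pr p W w = (Fintype.card (Matrix (Fin K) (Fin L) 𝔽) : ℝ)⁻¹
  /-- the input is independent of all keys (including the source key) -/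
  indep : ∀ (w : Matrix (Fin K) (Fin L) 𝔽) (z : (∀ k, κ k) × σ),
    pr p (fun ω => (W ω, ((fun k => Z k ω), Zsrc ω))) (w, z)
      = pr p W w * pr p (fun ω => ((fun k => Z k ω), Zsrc ω)) z
  /-- each key is a deterministic function of the source key -/
  Z_det : ∀ k : Fin K, ∃ f : σ → κ k, ∀ ω, Z k ω = f (Zsrc ω)
  /-- each message is a deterministic function of (own input row, own key) -/
  X_det : ∀ k : Fin K, ∃ f : (Fin L → 𝔽) → κ k → χ k, ∀ ω, X k ω = f (W ω k) (Z k ω)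
  /-- correctness: `F ⬝ W` is determined by the messages -/
  correct : Hc p (fun ω => F * W ω) (fun ω k => X k ω) = 0
  /-- security: the messages reveal nothing about `G ⬝ W` beyond `F ⬝ W` -/
  secure : CMI p (fun ω => G * W ω) (fun ω k => X k ω) (fun ω => F * W ω) = 0

end

end SecAgg
namespace SecAgg

namespace Aux
open Finset Real
variable {Ω α β γ : Type*} [Fintype Ω] {p : Ω → ℝ}

lemma pr_nonneg (hp : ∀ ω, 0 ≤ p ω) (X : Ω → α) (a : α) : 0 ≤ pr p X a :=
  Finset.sum_nonneg fun ω _ => by split <;> simp [hp ω]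

lemma exists_of_pr_pos {X : Ω → α} {a : α} (h : 0 < pr p X a) :
    ∃ ω, p ω ≠ 0 ∧ X ω = a := by
  by_contra hc
  push_neg at hc
  have : pr p X a = 0 := by
    refine Finset.sum_eq_zero fun ω _ => ?_
    by_cases hx : X ω = a
    · simp only [hx, if_true]
      by_contra h0
      exact hc ω h0 hx
    · simp [hx]
  linarith

lemma pr_pos_apply (hp : ∀ ω, 0 ≤ p ω) (X : Ω → α) {ω : Ω} (hω : 0 < p ω) :
    0 < pr p X (X ω) := by
  have h1 : (if X ω = X ω then p ω else 0) ≤ pr p X (X ω) :=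
    Finset.single_le_sum (f := fun ω' => if X ω' = X ω then p ω' else 0)
      (fun ω' _ => by by_cases h : X ω' = X ω <;> simp [h, hp ω']) (Finset.mem_univ ω)
  simpa using lt_of_lt_of_le (by simpa using hω) h1

lemma pr_eq_zero_of_not_mem {X : Ω → α} {a : α}
    (ha : a ∉ Finset.univ.image X) : pr p X a = 0 := by
  refine Finset.sum_eq_zero fun ω _ => ?_
  have : X ω ≠ a := fun h => ha (Finset.mem_image.2 ⟨ω, Finset.mem_univ ω, h⟩)
  simp [this]

lemma mem_image_of_pr_pos (hp : ∀ ω, 0 ≤ p ω) {X : Ω → α} {a : α}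
    (h : 0 < pr p X a) : a ∈ Finset.univ.image X := by
  obtain ⟨ω, _, hω⟩ := exists_of_pr_pos h
  exact Finset.mem_image.2 ⟨ω, Finset.mem_univ ω, hω⟩

lemma sum_pr_superset {X : Ω → α} {s : Finset α}
    (hs : ∀ a, (∃ ω, X ω = a) → a ∈ s) : ∑ a ∈ s, pr p X a = ∑ ω, p ω := by
  unfold pr
  rw [Finset.sum_comm]
  refine Finset.sum_congr rfl fun ω _ => ?_
  rw [Finset.sum_ite_eq s (X ω) (fun _ => p ω), if_pos (hs (X ω) ⟨ω, rfl⟩)]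

lemma H_eq_sum_superset {X : Ω → α} {s : Finset α}
    (hs : ∀ a, (∃ ω, X ω = a) → a ∈ s) :
    H p X = ∑ a ∈ s, Real.negMulLog (pr p X a) := by
  unfold H
  refine Finset.sum_subset (fun a ha => ?_) fun a _ ha => ?_
  · obtain ⟨ω, _, rfl⟩ := Finset.mem_image.1 ha
    exact hs _ ⟨ω, rfl⟩
  · rw [pr_eq_zero_of_not_mem ha, Real.negMulLog_zero]

lemma pr_comp (X : Ω → α) (f : α → β) (b : β) :
    pr p (fun ω => f (X ω)) b
      = ∑ a ∈ (Finset.univ.image X).filter (fun a => f a = b), pr p X a := by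
  set t := (Finset.univ.image X).filter (fun a => f a = b) with ht
  have key : ∀ ω : Ω, (∑ a ∈ t, if X ω = a then p ω else 0)
      = (if f (X ω) = b then p ω else 0) := by
    intro ω
    rw [Finset.sum_ite_eq t (X ω) fun _ => p ω]
    by_cases hb : f (X ω) = b
    · rw [if_pos, if_pos hb]
      exact Finset.mem_filter.2 ⟨Finset.mem_image.2 ⟨ω, Finset.mem_univ ω, rfl⟩, hb⟩
    · have hX : X ω ∉ t := fun hmem => hb (Finset.mem_filter.1 hmem).2
      rw [if_neg hX, if_neg hb]
  calc pr p (fun ω => f (X ω)) b = ∑ ω, if f (X ω) = b then p ω else 0 := rfl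
    _ = ∑ ω, ∑ a ∈ t, if X ω = a then p ω else 0 :=
        Finset.sum_congr rfl fun ω _ => (key ω).symm
    _ = ∑ a ∈ t, ∑ ω, if X ω = a then p ω else 0 := Finset.sum_comm
    _ = ∑ a ∈ t, pr p X a := rfl

lemma negMulLog_add_le {x y : ℝ} (hx : 0 ≤ x) (hy : 0 ≤ y) :
    Real.negMulLog (x + y) ≤ Real.negMulLog x + Real.negMulLog y := by
  have h1 : x * Real.log x ≤ x * Real.log (x + y) := by
    rcases eq_or_lt_of_le hx with h | h
    · simp [← h]
    · exact mul_le_mul_of_nonneg_left (Real.log_le_log h (by linarith)) hx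
  have h2 : y * Real.log y ≤ y * Real.log (x + y) := by
    rcases eq_or_lt_of_le hy with h | h
    · simp [← h]
    · exact mul_le_mul_of_nonneg_left (Real.log_le_log h (by linarith)) hy
  simp only [Real.negMulLog]
  nlinarith [h1, h2]

lemma negMulLog_add_lt {x y : ℝ} (hx : 0 < x) (hy : 0 < y) :
    Real.negMulLog (x + y) < Real.negMulLog x + Real.negMulLog y := by
  have h1 : x * Real.log x < x * Real.log (x + y) :=
    mul_lt_mul_of_pos_left (Real.log_lt_log hx (by linarith)) hx
  have h2 : y * Real.log y ≤ y * Real.log (x + y) :=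
    mul_le_mul_of_nonneg_left (Real.log_le_log hy (by linarith)) hy.le
  simp only [Real.negMulLog]
  nlinarith [h1, h2]

lemma negMulLog_sum_le {ι : Type*} (s : Finset ι) (f : ι → ℝ)
    (hf : ∀ i ∈ s, 0 ≤ f i) :
    Real.negMulLog (∑ i ∈ s, f i) ≤ ∑ i ∈ s, Real.negMulLog (f i) := by
  induction s using Finset.cons_induction with
  | empty => simp [Real.negMulLog_zero]
  | cons a s ha ih =>
    rw [Finset.sum_cons, Finset.sum_cons]
    have hs : 0 ≤ ∑ i ∈ s, f i :=
      Finset.sum_nonneg fun i hi => hf i (Finset.mem_cons_of_mem hi)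
    calc Real.negMulLog (f a + ∑ i ∈ s, f i)
        ≤ Real.negMulLog (f a) + Real.negMulLog (∑ i ∈ s, f i) :=
          negMulLog_add_le (hf a (Finset.mem_cons_self a s)) hs
      _ ≤ _ := by
          have := ih fun i hi => hf i (Finset.mem_cons_of_mem hi)
          linarith

lemma negMulLog_sum_lt {ι : Type*} (s : Finset ι) (f : ι → ℝ)
    (hf : ∀ i ∈ s, 0 ≤ f i) {i j : ι} (hi : i ∈ s) (hj : j ∈ s) (hij : i ≠ j)
    (hfi : 0 < f i) (hfj : 0 < f j) :
    Real.negMulLog (∑ k ∈ s, f k) < ∑ k ∈ s, Real.negMulLog (f k) := by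
  have hfe : ∀ k ∈ s.erase i, 0 ≤ f k := fun k hk => hf k (Finset.mem_of_mem_erase hk)
  have hjE : j ∈ s.erase i := Finset.mem_erase.2 ⟨fun h => hij h.symm, hj⟩
  have hErasePos : 0 < ∑ k ∈ s.erase i, f k :=
    lt_of_lt_of_le hfj (Finset.single_le_sum hfe hjE)
  have hsplit : ∑ k ∈ s, f k = f i + ∑ k ∈ s.erase i, f k :=
    (Finset.add_sum_erase s f hi).symm
  have hsplit2 : ∑ k ∈ s, Real.negMulLog (f k)
      = Real.negMulLog (f i) + ∑ k ∈ s.erase i, Real.negMulLog (f k) :=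
    (Finset.add_sum_erase s _ hi).symm
  rw [hsplit, hsplit2]
  calc Real.negMulLog (f i + ∑ k ∈ s.erase i, f k)
      < Real.negMulLog (f i) + Real.negMulLog (∑ k ∈ s.erase i, f k) :=
        negMulLog_add_lt hfi hErasePos
    _ ≤ _ := by
        have := negMulLog_sum_le (s.erase i) f hfe
        linarith

/-- If at most one element of `s` has positive value, `negMulLog` of the sum
equals the sum of `negMulLog`s. -/
lemma negMulLog_sum_eq {ι : Type*} (s : Finset ι) (f : ι → ℝ)
    (hf : ∀ i ∈ s, 0 ≤ f i)
    (huniq : ∀ i ∈ s, ∀ j ∈ s, 0 < f i → 0 < f j → i = j) :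
    Real.negMulLog (∑ i ∈ s, f i) = ∑ i ∈ s, Real.negMulLog (f i) := by
  by_cases hex : ∃ i ∈ s, 0 < f i
  · obtain ⟨i, hi, hfi⟩ := hex
    have hz : ∀ j ∈ s, j ≠ i → f j = 0 := by
      intro j hj hji
      rcases eq_or_lt_of_le (hf j hj) with h | h
      · exact h.symm
      · exact absurd (huniq j hj i hi h hfi) hji
    rw [Finset.sum_eq_single_of_mem i hi hz,
      Finset.sum_eq_single_of_mem i hi (fun j hj hji => by
        rw [hz j hj hji, Real.negMulLog_zero])]
  · push_neg at hex
    have hz : ∀ i ∈ s, f i = 0 := fun i hi => le_antisymm (hex i hi) (hf i hi)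
    rw [Finset.sum_eq_zero hz, Finset.sum_eq_zero
      (fun i hi => by rw [hz i hi, Real.negMulLog_zero]), Real.negMulLog_zero]

lemma H_decomp (X : Ω → α) (f : α → β) :
    H p X = ∑ b ∈ Finset.univ.image (fun ω => f (X ω)),
      ∑ a ∈ (Finset.univ.image X).filter (fun a => f a = b),
        Real.negMulLog (pr p X a) := by
  refine (Finset.sum_fiberwise_of_maps_to (fun a ha => ?_) _).symm
  obtain ⟨ω, _, rfl⟩ := Finset.mem_image.1 ha
  exact Finset.mem_image.2 ⟨ω, Finset.mem_univ ω, rfl⟩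

lemma H_comp_le (hp : ∀ ω, 0 ≤ p ω) (X : Ω → α) (f : α → β) :
    H p (fun ω => f (X ω)) ≤ H p X := by
  rw [H_decomp X f]
  unfold H
  refine Finset.sum_le_sum fun b _ => ?_
  rw [pr_comp X f b]
  exact negMulLog_sum_le _ _ fun a _ => pr_nonneg hp X a

lemma H_comp_eq_of_injOn (hp : ∀ ω, 0 ≤ p ω) (X : Ω → α) (f : α → β)
    (hinj : ∀ a a', 0 < pr p X a → 0 < pr p X a' → f a = f a' → a = a') :
    H p (fun ω => f (X ω)) = H p X := by
  rw [H_decomp X f]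
  unfold H
  refine Finset.sum_congr rfl fun b _ => ?_
  rw [pr_comp X f b]
  refine negMulLog_sum_eq _ _ (fun a _ => pr_nonneg hp X a) fun a ha a' ha' hpa hpa' => ?_
  exact hinj a a' hpa hpa'
    ((Finset.mem_filter.1 ha).2.trans (Finset.mem_filter.1 ha').2.symm)

/-- Equality case: if `H (A, B) ≤ H B`, then `A` is a function of `B`
on the support of `p`. -/
lemma fiber_unique_of_H_le (hp : ∀ ω, 0 ≤ p ω) (X : Ω → α) (f : α → β)
    (hH : H p X ≤ H p (fun ω => f (X ω))) :
    ∀ a a', 0 < pr p X a → 0 < pr p X a' → f a = f a' → a = a' := by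
  intro a a' hpa hpa' hfa
  by_contra hne
  obtain ⟨ω, hω, hωa⟩ := exists_of_pr_pos hpa
  obtain ⟨ω', hω', hωa'⟩ := exists_of_pr_pos hpa'
  have hcomp : H p (fun ω => f (X ω))
      = ∑ b ∈ Finset.univ.image (fun ω => f (X ω)),
          Real.negMulLog (pr p (fun ω => f (X ω)) b) := rfl
  have hb0mem : f a ∈ Finset.univ.image (fun ω => f (X ω)) :=
    Finset.mem_image.2 ⟨ω, Finset.mem_univ ω, by rw [hωa]⟩
  have hlt : H p (fun ω => f (X ω)) < H p X := by
    rw [hcomp, H_decomp X f]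
    refine Finset.sum_lt_sum
      (fun b _ => by
        rw [pr_comp X f b]
        exact negMulLog_sum_le _ _ fun c _ => pr_nonneg hp X c)
      ⟨f a, hb0mem, ?_⟩
    rw [pr_comp X f (f a)]
    refine negMulLog_sum_lt _ _ (fun c _ => pr_nonneg hp X c)
      (Finset.mem_filter.2 ⟨Finset.mem_image.2 ⟨ω, Finset.mem_univ ω, hωa⟩, rfl⟩)
      (Finset.mem_filter.2 ⟨Finset.mem_image.2 ⟨ω', Finset.mem_univ ω', hωa'⟩, hfa.symm⟩)
      hne hpa hpa'
  linarith

/-- Equality case: if `H (A, B) ≤ H B`, then `A` is a function of `B`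
on the support of `p`. -/
lemma exists_det_of_H_pair_le [Nonempty α] (hp : ∀ ω, 0 ≤ p ω)
    (A : Ω → α) (B : Ω → β)
    (hH : H p (fun ω => (A ω, B ω)) ≤ H p B) :
    ∃ g : β → α, ∀ ω, 0 < p ω → A ω = g (B ω) := by
  have huniq := fiber_unique_of_H_le hp (fun ω => (A ω, B ω)) Prod.snd hH
  refine ⟨fun b => if h : ∃ a, 0 < pr p (fun ω => (A ω, B ω)) (a, b) then h.choose
      else Classical.arbitrary α, fun ω hω => ?_⟩
  have hpos : 0 < pr p (fun ω => (A ω, B ω)) (A ω, B ω) :=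
    pr_pos_apply hp (fun ω => (A ω, B ω)) hω
  have hex : ∃ a, 0 < pr p (fun ω => (A ω, B ω)) (a, B ω) := ⟨A ω, hpos⟩
  simp only [dif_pos hex]
  have h2 := huniq _ _ hex.choose_spec hpos rfl
  exact (congrArg Prod.fst h2).symm

lemma pr_fst_eq (A : Ω → α) (B : Ω → β) (a : α) :
    pr p A a = ∑ b ∈ Finset.univ.image B, pr p (fun ω => (A ω, B ω)) (a, b) := by
  unfold pr
  rw [Finset.sum_comm]
  refine Finset.sum_congr rfl fun ω _ => ?_
  simp only [Prod.mk.injEq, ite_and]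
  by_cases hA : A ω = a
  · simp only [hA, if_true]
    rw [Finset.sum_ite_eq (Finset.univ.image B) (B ω) (fun _ => p ω),
      if_pos (Finset.mem_image.2 ⟨ω, Finset.mem_univ ω, rfl⟩)]
  · simp [hA]

lemma pr_snd_eq (A : Ω → α) (B : Ω → β) (b : β) :
    pr p B b = ∑ a ∈ Finset.univ.image A, pr p (fun ω => (A ω, B ω)) (a, b) := by
  unfold pr
  rw [Finset.sum_comm]
  refine Finset.sum_congr rfl fun ω _ => ?_
  simp only [Prod.mk.injEq, ite_and]
  by_cases hB : B ω = b
  · simp only [hB, if_true]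
    rw [Finset.sum_ite_eq (Finset.univ.image A) (A ω) (fun _ => p ω),
      if_pos (Finset.mem_image.2 ⟨ω, Finset.mem_univ ω, rfl⟩)]
  · simp [hB]

lemma sum_pr_eq_one (hp1 : ∑ ω, p ω = 1) (X : Ω → α) :
    ∑ a ∈ Finset.univ.image X, pr p X a = 1 := by
  rw [sum_pr_superset (fun a ⟨ω, hω⟩ => Finset.mem_image.2 ⟨ω, Finset.mem_univ ω, hω⟩)]
  exact hp1

lemma H_pair_of_indep (hp1 : ∑ ω, p ω = 1) (A : Ω → α) (B : Ω → β)
    (hind : ∀ a b, pr p (fun ω => (A ω, B ω)) (a, b) = pr p A a * pr p B b) :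
    H p (fun ω => (A ω, B ω)) = H p A + H p B := by
  rw [H_eq_sum_superset (s := (Finset.univ.image A) ×ˢ (Finset.univ.image B))
    (fun c hc => by
      obtain ⟨ω, rfl⟩ := hc
      exact Finset.mem_product.2 ⟨Finset.mem_image.2 ⟨ω, Finset.mem_univ ω, rfl⟩,
        Finset.mem_image.2 ⟨ω, Finset.mem_univ ω, rfl⟩⟩)]
  rw [Finset.sum_product]
  have hB1 : ∑ b ∈ Finset.univ.image B, pr p B b = 1 := sum_pr_eq_one hp1 B
  have hA1 : ∑ a ∈ Finset.univ.image A, pr p A a = 1 := sum_pr_eq_one hp1 A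
  have step : ∀ a, (∑ b ∈ Finset.univ.image B,
      Real.negMulLog (pr p (fun ω => (A ω, B ω)) (a, b)))
      = Real.negMulLog (pr p A a) + pr p A a * H p B := by
    intro a
    have h1 : ∀ b ∈ Finset.univ.image B,
        Real.negMulLog (pr p (fun ω => (A ω, B ω)) (a, b))
        = pr p B b * Real.negMulLog (pr p A a)
          + pr p A a * Real.negMulLog (pr p B b) := fun b _ => by
      rw [hind a b, Real.negMulLog_mul]
    rw [Finset.sum_congr rfl h1, Finset.sum_add_distrib, ← Finset.sum_mul, hB1,
      one_mul, ← Finset.mul_sum]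
    rfl
  rw [Finset.sum_congr rfl fun a _ => step a, Finset.sum_add_distrib,
    ← Finset.sum_mul, hA1, one_mul]
  rfl

/-- Subadditivity of entropy. -/
lemma H_pair_le (hp : ∀ ω, 0 ≤ p ω) (hp1 : ∑ ω, p ω = 1) (A : Ω → α) (B : Ω → β) :
    H p (fun ω => (A ω, B ω)) ≤ H p A + H p B := by
  set P : Ω → α × β := fun ω => (A ω, B ω) with hP
  set sB : Finset β := Finset.univ.image B with hsB
  set sA : Finset α := Finset.univ.image A with hsA
  set B' : Finset β := sB.filter (fun b => 0 < pr p B b) with hB'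
  have hprP : ∀ c : α × β, 0 ≤ pr p P c := fun c => pr_nonneg hp P c
  have hjoint_le : ∀ a b, a ∈ sA → pr p P (a, b) ≤ pr p B b := by
    intro a b ha
    rw [pr_snd_eq A B b]
    exact Finset.single_le_sum (f := fun a => pr p P (a, b))
      (fun a _ => hprP (a, b)) ha
  have hzero : ∀ b, pr p B b = 0 → ∀ a ∈ sA, pr p P (a, b) = 0 := by
    intro b hb a ha
    have h1 := hjoint_le a b ha
    have h2 := hprP (a, b)
    linarith
  -- weights sum to one
  have hB1 : ∑ b ∈ B', pr p B b = 1 := by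
    rw [hB', Finset.sum_filter_of_ne (fun b _ hb => ?_)]
    · exact sum_pr_eq_one hp1 B
    · rcases lt_or_eq_of_le (pr_nonneg hp B b) with h | h
      · exact h
      · exact absurd h.symm hb
  -- conditional probabilities
  set c : α → β → ℝ := fun a b => pr p P (a, b) / pr p B b with hc
  have hcsum : ∀ b ∈ B', ∑ a ∈ sA, c a b = 1 := by
    intro b hb
    have hbpos : 0 < pr p B b := (Finset.mem_filter.1 hb).2
    rw [hc]
    rw [← Finset.sum_div, ← pr_snd_eq A B b, div_self (ne_of_gt hbpos)]
  have hmarg : ∀ a, pr p A a = ∑ b ∈ B', pr p B b * c a b := by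
    intro a
    rw [pr_fst_eq A B a, hB', Finset.sum_filter_of_ne]
    · refine Finset.sum_congr rfl fun b hb => ?_
      by_cases hbz : pr p B b = 0
      · by_cases haA : a ∈ sA
        · rw [hzero b hbz a haA, hbz]; ring
        · have : pr p P (a, b) = 0 := by
            by_contra hne
            have hpos : 0 < pr p P (a, b) :=
              lt_of_le_of_ne (hprP _) (Ne.symm hne)
            obtain ⟨ω, hω, hωc⟩ := exists_of_pr_pos hpos
            exact haA (Finset.mem_image.2 ⟨ω, Finset.mem_univ ω,
              congrArg Prod.fst hωc⟩)
          rw [this, hbz]; ring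
      · rw [hc]
        field_simp
        rfl
    · intro b hb hne
      rcases lt_or_eq_of_le (pr_nonneg hp B b) with h | h
      · exact h
      · exact absurd (by rw [← h, zero_mul]) hne
  -- decompose H pair
  have hHP : H p P = ∑ b ∈ sB, ∑ a ∈ sA, Real.negMulLog (pr p P (a, b)) := by
    rw [H_eq_sum_superset (s := sA ×ˢ sB)
      (fun cc hcc => by
        obtain ⟨ω, rfl⟩ := hcc
        exact Finset.mem_product.2 ⟨Finset.mem_image.2 ⟨ω, Finset.mem_univ ω, rfl⟩,
          Finset.mem_image.2 ⟨ω, Finset.mem_univ ω, rfl⟩⟩)]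
    exact Finset.sum_product_right (s := sA) (t := sB)
      (f := fun cc => Real.negMulLog (pr p P cc))
  have hinner : ∀ b ∈ sB, ∑ a ∈ sA, Real.negMulLog (pr p P (a, b))
      = (if 0 < pr p B b then
          pr p B b * (∑ a ∈ sA, Real.negMulLog (c a b)) + Real.negMulLog (pr p B b)
        else 0) := by
    intro b hb
    by_cases hbpos : 0 < pr p B b
    · rw [if_pos hbpos]
      have hbB' : b ∈ B' := Finset.mem_filter.2 ⟨hb, hbpos⟩
      have h1 : ∀ a ∈ sA, Real.negMulLog (pr p P (a, b))
          = pr p B b * Real.negMulLog (c a b) + c a b * Real.negMulLog (pr p B b) := by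
        intro a _
        have : pr p P (a, b) = pr p B b * c a b := by
          rw [hc]; field_simp
        rw [this, Real.negMulLog_mul, hc]
        ring
      rw [Finset.sum_congr rfl h1, Finset.sum_add_distrib, ← Finset.mul_sum,
        ← Finset.sum_mul, hcsum b hbB', one_mul]
    · rw [if_neg hbpos]
      have hbz : pr p B b = 0 := by
        rcases lt_or_eq_of_le (pr_nonneg hp B b) with h | h
        · exact absurd h hbpos
        · exact h.symm
      refine Finset.sum_eq_zero fun a ha => ?_
      rw [hzero b hbz a ha, Real.negMulLog_zero]
  -- Jensen step
  have hJensen : ∑ b ∈ B', pr p B b * (∑ a ∈ sA, Real.negMulLog (c a b)) ≤ H p A := by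
    have hswap : ∑ b ∈ B', pr p B b * (∑ a ∈ sA, Real.negMulLog (c a b))
        = ∑ a ∈ sA, ∑ b ∈ B', pr p B b * Real.negMulLog (c a b) := by
      rw [Finset.sum_comm]
      exact Finset.sum_congr rfl fun b _ => Finset.mul_sum _ _ _
    rw [hswap]
    have hHA : H p A = ∑ a ∈ sA, Real.negMulLog (pr p A a) := rfl
    rw [hHA]
    refine Finset.sum_le_sum fun a _ => ?_
    have hjen := Real.concaveOn_negMulLog.le_map_sum
      (t := B') (w := fun b => pr p B b) (p := fun b => c a b)
      (fun b _ => pr_nonneg hp B b) hB1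
      (fun b hb => by
        have hbpos : 0 < pr p B b := (Finset.mem_filter.1 hb).2
        exact Set.mem_Ici.2 (div_nonneg (hprP _) hbpos.le))
    simp only [smul_eq_mul] at hjen
    calc ∑ b ∈ B', pr p B b * Real.negMulLog (c a b)
        ≤ Real.negMulLog (∑ b ∈ B', pr p B b * c a b) := hjen
      _ = Real.negMulLog (pr p A a) := by rw [← hmarg a]
  -- entropy of B over positive part
  have hHB : ∑ b ∈ B', Real.negMulLog (pr p B b) = H p B := by
    rw [hB', Finset.sum_filter_of_ne (fun b _ hb => ?_)]
    · rfl
    · by_contra hble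
      push_neg at hble
      have hbz : pr p B b = 0 := le_antisymm hble (pr_nonneg hp B b)
      rw [hbz, Real.negMulLog_zero] at hb
      exact hb rfl
  -- assemble
  rw [hHP, Finset.sum_congr rfl hinner, Finset.sum_ite, Finset.sum_const_zero, add_zero]
  have hfilter : sB.filter (fun b => 0 < pr p B b) = B' := rfl
  rw [hfilter, Finset.sum_add_distrib, hHB]
  have := hJensen
  linarith

lemma add_fibers_card {V U : Type*} [AddGroup V] [AddCommGroup U] (φ : V →+ U)
    {b b' : U} (hb : ∃ v, φ v = b) (hb' : ∃ v, φ v = b') :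
    Nat.card {v // φ v = b} = Nat.card {v // φ v = b'} := by
  obtain ⟨v₀, hv₀⟩ := hb
  obtain ⟨v₀', hv₀'⟩ := hb'
  refine Nat.card_congr ⟨fun x => ⟨x.1 - v₀ + v₀', ?_⟩, fun y => ⟨y.1 - v₀' + v₀, ?_⟩,
    fun x => ?_, fun y => ?_⟩
  · rw [map_add, map_sub, x.2, hv₀, hv₀']; abel
  · rw [map_add, map_sub, y.2, hv₀, hv₀']; abel
  · ext; simp
  · ext; simp

/-- Entropy of a function of a uniform random variable, when the function has
equinumerous fibers on its range. -/
lemma H_uniform_comp {V : Type*} [Fintype V] [Nonempty V]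
    (hp : ∀ ω, 0 ≤ p ω) (hp1 : ∑ ω, p ω = 1)
    (W : Ω → V) (hW : ∀ v, pr p W v = (Fintype.card V : ℝ)⁻¹) (φ : V → β)
    (hfib : ∀ b b', (∃ v, φ v = b) → (∃ v, φ v = b') →
      Nat.card {v // φ v = b} = Nat.card {v // φ v = b'}) :
    H p (fun ω => φ (W ω)) = Real.log (Nat.card (Set.range φ)) := by
  set n := Fintype.card V with hn
  have hnpos : 0 < n := Fintype.card_pos
  have hprW : ∀ v, 0 < pr p W v := fun v => by
    rw [hW v]
    exact inv_pos.2 (by exact_mod_cast hnpos)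
  have himW : Finset.univ.image W = Finset.univ :=
    Finset.eq_univ_iff_forall.2 fun v => by
      obtain ⟨ω, _, hω⟩ := exists_of_pr_pos (hprW v)
      exact Finset.mem_image.2 ⟨ω, Finset.mem_univ ω, hω⟩
  set v₀ : V := Classical.arbitrary V with hv₀
  set c : ℕ := (Finset.univ.filter (fun v => φ v = φ v₀)).card with hcdef
  have hcpos : 0 < c := Finset.card_pos.2 ⟨v₀, Finset.mem_filter.2 ⟨Finset.mem_univ _, rfl⟩⟩
  have hfibcard : ∀ b, (∃ v, φ v = b) →
      (Finset.univ.filter (fun v => φ v = b)).card = c := by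
    intro b hb
    have h1 := hfib b (φ v₀) hb ⟨v₀, rfl⟩
    rw [Nat.card_eq_fintype_card, Nat.card_eq_fintype_card,
      Fintype.card_subtype, Fintype.card_subtype] at h1
    exact h1
  -- value of pr on attained points
  have hprval : ∀ b, (∃ v, φ v = b) →
      pr p (fun ω => φ (W ω)) b = (c : ℝ) / n := by
    intro b hb
    rw [pr_comp W φ b, himW]
    rw [Finset.sum_congr rfl (fun v _ => hW v), Finset.sum_const, nsmul_eq_mul]
    rw [hfibcard b hb]
    rw [div_eq_mul_inv]
  -- image of φ ∘ W
  have himφ : Finset.univ.image (fun ω => φ (W ω)) = Finset.univ.image φ := by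
    ext b
    simp only [Finset.mem_image, Finset.mem_univ, true_and]
    constructor
    · rintro ⟨ω, hω⟩; exact ⟨W ω, hω⟩
    · rintro ⟨v, hv⟩
      obtain ⟨ω, _, hω⟩ := exists_of_pr_pos (hprW v)
      exact ⟨ω, by rw [hω, hv]⟩
  set m := (Finset.univ.image φ).card with hm
  have hmpos : 0 < m := Finset.card_pos.2 ⟨φ v₀, Finset.mem_image.2 ⟨v₀, Finset.mem_univ _, rfl⟩⟩
  have hcount : m * c = n := by
    rw [hn, ← Finset.card_univ (α := V),
      Finset.card_eq_sum_card_fiberwise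
        (f := φ) (t := Finset.univ.image φ)
        (fun v _ => Finset.mem_image.2 ⟨v, Finset.mem_univ _, rfl⟩)]
    rw [Finset.sum_congr rfl (fun b hb => by
      obtain ⟨v, _, hv⟩ := Finset.mem_image.1 hb
      exact hfibcard b ⟨v, hv⟩)]
    rw [Finset.sum_const, smul_eq_mul]
  have hcn : (c : ℝ) / n = (m : ℝ)⁻¹ := by
    have hc0 : (c : ℝ) ≠ 0 := by exact_mod_cast hcpos.ne'
    have hm0 : (m : ℝ) ≠ 0 := by exact_mod_cast hmpos.ne'
    rw [← hcount]
    push_cast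
    field_simp
  have hH : H p (fun ω => φ (W ω)) = Real.log m := by
    have h0 : H p (fun ω => φ (W ω)) = ∑ b ∈ Finset.univ.image (fun ω => φ (W ω)),
        Real.negMulLog (pr p (fun ω => φ (W ω)) b) := rfl
    rw [h0, himφ]
    rw [Finset.sum_congr rfl (fun b hb => by
      obtain ⟨v, _, hv⟩ := Finset.mem_image.1 hb
      rw [hprval b ⟨v, hv⟩, hcn])]
    rw [Finset.sum_const, nsmul_eq_mul]
    rw [Real.negMulLog, Real.log_inv]
    have : (m : ℝ) ≠ 0 := by exact_mod_cast hmpos.ne'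
    field_simp
    rw [← hm]
  rw [hH]
  congr 1
  -- Nat.card (Set.range φ) = m
  have e : Set.range φ ≃ {b // b ∈ Finset.univ.image φ} :=
    Equiv.subtypeEquivRight (fun b => by simp [Set.mem_range, eq_comm])
  rw [Nat.card_congr e, Nat.card_eq_fintype_card, Fintype.card_coe]

lemma pr_pair_marg (Kf : Ω → γ) (B : Ω → β) (b : β) :
    ∑ z ∈ Finset.univ.image Kf, pr p (fun ω => (Kf ω, B ω)) (z, b) = pr p B b := by
  unfold pr
  rw [Finset.sum_comm]
  refine Finset.sum_congr rfl fun ω _ => ?_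
  simp only [Prod.mk.injEq, ite_and]
  rw [Finset.sum_ite_eq (Finset.univ.image Kf) (Kf ω)
      (fun _ => if B ω = b then p ω else 0),
    if_pos (Finset.mem_image.2 ⟨ω, Finset.mem_univ ω, rfl⟩)]

lemma pr_triple_marg (A : Ω → α) (Kf : Ω → γ) (B : Ω → β) (a : α) (b : β) :
    ∑ z ∈ Finset.univ.image Kf, pr p (fun ω => (A ω, (Kf ω, B ω))) (a, (z, b))
      = pr p (fun ω => (A ω, B ω)) (a, b) := by
  unfold pr
  rw [Finset.sum_comm]
  refine Finset.sum_congr rfl fun ω _ => ?_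
  simp only [Prod.mk.injEq, ite_and]
  by_cases hA : A ω = a
  · simp only [hA, if_true]
    rw [Finset.sum_ite_eq (Finset.univ.image Kf) (Kf ω)
        (fun _ => if B ω = b then p ω else 0),
      if_pos (Finset.mem_image.2 ⟨ω, Finset.mem_univ ω, rfl⟩)]
  · simp [hA]

section MatrixCard
variable {𝔽 : Type} [Field 𝔽] [Fintype 𝔽] {m m' K L : ℕ}

lemma card_range_matMul {mty : Type*} [Fintype mty] (A : Matrix mty (Fin K) 𝔽) :
    Nat.card (Set.range (fun w : Matrix (Fin K) (Fin L) 𝔽 => A * w))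
      = Fintype.card 𝔽 ^ (A.rank * L) := by
  have E : Set.range (fun w : Matrix (Fin K) (Fin L) 𝔽 => A * w)
      ≃ (Fin L → LinearMap.range A.mulVecLin) := by
    refine ⟨fun x => fun j => ⟨fun i => x.1 i j, ?_⟩,
      fun g => ⟨fun i j => (g j).1 i, ?_⟩, fun x => ?_, fun g => ?_⟩
    · obtain ⟨w, hw⟩ := x.2
      refine ⟨fun k => w k j, ?_⟩
      funext i
      rw [← hw]
      simp [Matrix.mulVecLin, Matrix.mulVec, Matrix.mul_apply, dotProduct]
    · choose w hw using fun j => (g j).2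
      refine ⟨fun k j => w j k, ?_⟩
      funext i j
      have := congrFun (hw j) i
      simp only [Matrix.mulVecLin, LinearMap.coe_mk, AddHom.coe_mk] at this
      show (A * Matrix.of fun k j => w j k) i j = _
      rw [Matrix.mul_apply, ← this]
      simp [Matrix.mulVec, dotProduct]
    · exact Subtype.ext rfl
    · funext j; exact Subtype.ext rfl
  rw [Nat.card_congr E, Nat.card_eq_fintype_card, Fintype.card_fun]
  rw [show Fintype.card (LinearMap.range A.mulVecLin) = Fintype.card 𝔽 ^ A.rank from
    Module.card_eq_pow_finrank]
  rw [← pow_mul, Fintype.card_fin]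

lemma rank_reindex_rect {R : Type*} [CommRing R] {k m n l : Type*}
    [Fintype n] [Fintype l] (e₁ : k ≃ m) (e₂ : l ≃ n) (M : Matrix k l R) :
    (Matrix.reindex e₁ e₂ M).rank = M.rank := by
  rw [Matrix.rank, Matrix.rank, Matrix.mulVecLin_reindex, LinearMap.range_comp,
    LinearMap.range_comp, LinearEquiv.range, Submodule.map_top,
    LinearEquiv.finrank_map_eq]

lemma rank_fromRows_comm (F : Matrix (Fin m) (Fin K) 𝔽) (G : Matrix (Fin m') (Fin K) 𝔽) :
    (Matrix.fromRows G F).rank = (Matrix.fromRows F G).rank := by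
  have h : Matrix.fromRows G F
      = (Matrix.reindex (Equiv.sumComm (Fin m) (Fin m')) (Equiv.refl (Fin K)))
          (Matrix.fromRows F G) := by
    ext i j
    cases i <;> simp [Matrix.fromRows, Matrix.reindex_apply, Matrix.submatrix_apply] <;> rfl
  rw [h, rank_reindex_rect]

lemma card_range_pairMul (F : Matrix (Fin m) (Fin K) 𝔽) (G : Matrix (Fin m') (Fin K) 𝔽) :
    Nat.card (Set.range (fun w : Matrix (Fin K) (Fin L) 𝔽 => (G * w, F * w)))
      = Fintype.card 𝔽 ^ ((Matrix.fromRows F G).rank * L) := by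
  have E : Set.range (fun w : Matrix (Fin K) (Fin L) 𝔽 => (G * w, F * w))
      ≃ Set.range (fun w : Matrix (Fin K) (Fin L) 𝔽 => Matrix.fromRows G F * w) := by
    refine ⟨fun x => ⟨Matrix.fromRows x.1.1 x.1.2, ?_⟩,
      fun y => ⟨(Matrix.toRows₁ y.1, Matrix.toRows₂ y.1), ?_⟩, fun x => ?_, fun y => ?_⟩
    · obtain ⟨w, hw⟩ := x.2
      refine ⟨w, ?_⟩
      show Matrix.fromRows G F * w = _
      rw [Matrix.fromRows_mul, show G * w = x.1.1 from congrArg Prod.fst hw,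
        show F * w = x.1.2 from congrArg Prod.snd hw]
    · obtain ⟨w, hw⟩ := y.2
      refine ⟨w, ?_⟩
      show (G * w, F * w) = (Matrix.toRows₁ y.1, Matrix.toRows₂ y.1)
      rw [← show Matrix.fromRows G F * w = y.1 from hw, Matrix.fromRows_mul,
        Matrix.toRows₁_fromRows, Matrix.toRows₂_fromRows]
    · exact Subtype.ext (by simp)
    · exact Subtype.ext (by simp)
  rw [Nat.card_congr E, card_range_matMul, rank_fromRows_comm]

end MatrixCard

end Aux


open Aux in
/-- For any secure aggregation scheme for `(F, G)` with `F` having no zero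
columns, the conditional entropy of the message tuple given the input is at
least `(rank [F; G] − rank F) · L · log q`. -/
theorem message_cond_entropy_lower_bound
    {𝔽 : Type} [Field 𝔽] [Fintype 𝔽] {K M N : ℕ} {L : ℕ}
    (hK : 1 ≤ K) (hL : 1 ≤ L)
    (F : Matrix (Fin M) (Fin K) 𝔽) (G : Matrix (Fin N) (Fin K) 𝔽)
    (hF : F.rank = M) (hG : G.rank = N)
    (hFcol : ∀ k : Fin K, ∃ i : Fin M, F i k ≠ 0)
    (Ω : Type) [Fintype Ω] (κ : Fin K → Type) (σ : Type) (χ : Fin K → Type)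
    (S : Scheme 𝔽 L F G Ω κ σ χ) :
    (((Matrix.fromRows F G).rank : ℝ) - (F.rank : ℝ)) * L * Real.log (Fintype.card 𝔽)
      ≤ Hc S.p (fun ω k => S.X k ω) S.W := by
  obtain ⟨p, hp, hp1, W, Z, Zsrc, X, W_unif, indep, Z_det, X_det, correct, secure⟩ := S
  dsimp only at *
  choose f hf using X_det
  choose g hg using Z_det
  letI : Nonempty (Matrix (Fin K) (Fin L) 𝔽) := ⟨0⟩
  letI : Nonempty (Matrix (Fin M) (Fin L) 𝔽) := ⟨0⟩
  -- correctness rephrased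
  have hco : H p (fun ω => (F * W ω, fun k => X k ω)) - H p (fun ω k => X k ω) = 0 :=
    correct
  -- security rephrased
  have hsec : H p (fun ω => (G * W ω, F * W ω))
      + H p (fun ω => ((fun k => X k ω), F * W ω))
      - H p (fun ω => (G * W ω, (fun k => X k ω), F * W ω))
      - H p (fun ω => F * W ω) = 0 := secure
  -- decoder from correctness
  obtain ⟨dec, hdec⟩ : ∃ dec : (∀ k, χ k) → Matrix (Fin M) (Fin L) 𝔽,
      ∀ ω, 0 < p ω → F * W ω = dec (fun k => X k ω) :=
    exists_det_of_H_pair_le hp (fun ω => F * W ω) (fun ω k => X k ω)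
      (le_of_eq (sub_eq_zero.1 hco))
  -- marginal independence of (W, Zsrc)
  have hWZs : ∀ w s, pr p (fun ω => (W ω, Zsrc ω)) (w, s)
      = pr p W w * pr p Zsrc s := by
    intro w s
    have h1 := pr_triple_marg (p := p) W (fun ω k => Z k ω) Zsrc w s
    rw [← h1, Finset.sum_congr rfl (fun z _ => indep w (z, s)), ← Finset.mul_sum]
    congr 1
    exact pr_pair_marg (fun ω k => Z k ω) Zsrc s
  have hHWZ : H p (fun ω => (W ω, Zsrc ω)) = H p W + H p Zsrc :=
    H_pair_of_indep hp1 W Zsrc hWZs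
  have hcardV : (0:ℝ) < (Fintype.card (Matrix (Fin K) (Fin L) 𝔽) : ℝ) := by
    exact_mod_cast Fintype.card_pos
  have hprW_pos : ∀ w, 0 < pr p W w := fun w => by
    rw [W_unif w]; exact inv_pos.2 hcardV
  -- injectivity of the per-source-key message map on the support
  have hinj : ∀ c c' : Matrix (Fin K) (Fin L) 𝔽 × σ,
      0 < pr p (fun ω => (W ω, Zsrc ω)) c → 0 < pr p (fun ω => (W ω, Zsrc ω)) c' →
      (((fun k => f k (c.1 k) (g k c.2)) : ∀ k, χ k), c.2)
        = (((fun k => f k (c'.1 k) (g k c'.2)) : ∀ k, χ k), c'.2) →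
      c = c' := by
    rintro ⟨w, s⟩ ⟨w', s'⟩ h1 h2 heq
    have hseq : s = s' := congrArg Prod.snd heq
    subst hseq
    have hfeq : (fun k => f k (w k) (g k s)) = (fun k => f k (w' k) (g k s)) :=
      congrArg Prod.fst heq
    suffices hww : w = w' by rw [hww]
    funext k
    by_contra hne
    have hs : 0 < pr p Zsrc s := by
      have h3 : 0 < pr p W w * pr p Zsrc s := by rw [← hWZs w s]; exact h1
      rcases (pr_nonneg hp Zsrc s).lt_or_eq with h | h
      · exact h
      · rw [← h, mul_zero] at h3; exact absurd h3 (lt_irrefl 0)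
    set b : Matrix (Fin K) (Fin L) 𝔽 := Matrix.updateRow w k (w' k) with hbdef
    have hprb : 0 < pr p (fun ω => (W ω, Zsrc ω)) (b, s) := by
      rw [hWZs b s]; exact mul_pos (hprW_pos b) hs
    obtain ⟨ωw, hωw0, hωweq⟩ := exists_of_pr_pos h1
    obtain ⟨ωb, hωb0, hωbeq⟩ := exists_of_pr_pos hprb
    have hWωw : W ωw = w := congrArg Prod.fst hωweq
    have hsωw : Zsrc ωw = s := congrArg Prod.snd hωweq
    have hWωb : W ωb = b := congrArg Prod.fst hωbeq
    have hsωb : Zsrc ωb = s := congrArg Prod.snd hωbeq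
    have hpωw : 0 < p ωw := lt_of_le_of_ne (hp ωw) (Ne.symm hωw0)
    have hpωb : 0 < p ωb := lt_of_le_of_ne (hp ωb) (Ne.symm hωb0)
    have hXeq : (fun k' => X k' ωw) = (fun k' => X k' ωb) := by
      funext k'
      rw [hf k' ωw, hf k' ωb, hg k' ωw, hg k' ωb, hWωw, hWωb, hsωw, hsωb]
      by_cases hkk : k' = k
      · subst hkk
        rw [show b k' = w' k' from Matrix.updateRow_self]
        exact congrFun hfeq k'
      · rw [show b k' = w k' from Matrix.updateRow_ne hkk]
    have hFeq : F * w = F * b := by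
      have e1 := hdec ωw hpωw
      have e2 := hdec ωb hpωb
      rw [hWωw] at e1; rw [hWωb] at e2
      rw [e1, e2, hXeq]
    obtain ⟨i, hFik⟩ := hFcol k
    obtain ⟨l, hl⟩ := Function.ne_iff.1 hne
    have hentry : (F * w) i l = (F * b) i l := by rw [hFeq]
    rw [Matrix.mul_apply, Matrix.mul_apply] at hentry
    have hsum : ∑ j, (F i j * b j l - F i j * w j l) = 0 := by
      rw [Finset.sum_sub_distrib, ← hentry]; ring
    rw [Finset.sum_eq_single k
      (fun j _ hjk => by
        rw [show b j = w j from Matrix.updateRow_ne hjk]; ring)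
      (fun hk => absurd (Finset.mem_univ k) hk)] at hsum
    rw [show b k = w' k from Matrix.updateRow_self] at hsum
    have h5 : F i k * w' k l = F i k * w k l := sub_eq_zero.1 hsum
    exact hl (mul_left_cancel₀ hFik h5).symm
  -- H(X, Zsrc) = H(W, Zsrc)
  have hHXZ : H p (fun ω => ((fun k => X k ω : ∀ k, χ k), Zsrc ω))
      = H p (fun ω => (W ω, Zsrc ω)) := by
    have h6 := H_comp_eq_of_injOn hp (fun ω => (W ω, Zsrc ω))
      (fun c => (((fun k => f k (c.1 k) (g k c.2)) : ∀ k, χ k), c.2)) hinj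
    have harg : (fun ω => ((fun k => X k ω : ∀ k, χ k), Zsrc ω))
        = (fun ω => (((fun k => f k (W ω k) (g k (Zsrc ω))) : ∀ k, χ k), Zsrc ω)) :=
      funext fun ω => Prod.ext (funext fun k => by
        show X k ω = f k (W ω k) (g k (Zsrc ω))
        rw [hf k ω, hg k ω]) rfl
    calc H p (fun ω => ((fun k => X k ω : ∀ k, χ k), Zsrc ω))
        = H p (fun ω => (((fun k => f k (W ω k) (g k (Zsrc ω))) : ∀ k, χ k), Zsrc ω)) := by
          rw [harg]
      _ = H p (fun ω => (W ω, Zsrc ω)) := h6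
  -- subadditivity gives H X ≥ H W
  have hsub : H p (fun ω => ((fun k => X k ω : ∀ k, χ k), Zsrc ω))
      ≤ H p (fun ω k => X k ω) + H p Zsrc :=
    H_pair_le hp hp1 (fun ω k => X k ω) Zsrc
  have hHX_ge : H p W ≤ H p (fun ω k => X k ω) := by linarith [hsub, hHXZ, hHWZ]
  -- swap + correctness : H (X, FW) = H X
  have hswap : H p (fun ω => ((fun k => X k ω : ∀ k, χ k), F * W ω))
      = H p (fun ω => (F * W ω, fun k => X k ω)) :=
    (H_comp_eq_of_injOn hp (fun ω => ((fun k => X k ω : ∀ k, χ k), F * W ω))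
      Prod.swap (fun a a' _ _ hs => Prod.swap_injective hs)).symm
  -- data processing
  have hDP : H p (fun ω => (G * W ω, (fun k => X k ω : ∀ k, χ k), F * W ω))
      ≤ H p (fun ω => ((fun k => X k ω : ∀ k, χ k), W ω)) :=
    H_comp_le hp (fun ω => ((fun k => X k ω : ∀ k, χ k), W ω))
      (fun c => (G * c.2, (c.1, F * c.2)))
  -- entropy values
  have hGF : H p (fun ω => (G * W ω, F * W ω))
      = (((Matrix.fromRows F G).rank * L : ℕ) : ℝ) * Real.log (Fintype.card 𝔽) := by
    have hfib : ∀ b b' : Matrix (Fin N) (Fin L) 𝔽 × Matrix (Fin M) (Fin L) 𝔽,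
        (∃ v : Matrix (Fin K) (Fin L) 𝔽, (G * v, F * v) = b) →
          (∃ v : Matrix (Fin K) (Fin L) 𝔽, (G * v, F * v) = b') →
        Nat.card {v : Matrix (Fin K) (Fin L) 𝔽 // (G * v, F * v) = b}
          = Nat.card {v : Matrix (Fin K) (Fin L) 𝔽 // (G * v, F * v) = b'} := by
      intro b b' hb hb'
      exact add_fibers_card
        (AddMonoidHom.mk' (fun v : Matrix (Fin K) (Fin L) 𝔽 =>
            ((G * v, F * v) : Matrix (Fin N) (Fin L) 𝔽 × Matrix (Fin M) (Fin L) 𝔽))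
          (fun x y => by
            show (G * (x + y), F * (x + y)) = (G * x, F * x) + (G * y, F * y)
            rw [Matrix.mul_add, Matrix.mul_add, Prod.mk_add_mk])) hb hb'
    calc H p (fun ω => (G * W ω, F * W ω))
        = Real.log (Nat.card (Set.range
            (fun v : Matrix (Fin K) (Fin L) 𝔽 => (G * v, F * v)))) :=
          H_uniform_comp hp hp1 W W_unif (fun v => (G * v, F * v)) hfib
      _ = (((Matrix.fromRows F G).rank * L : ℕ) : ℝ) * Real.log (Fintype.card 𝔽) := by
          rw [card_range_pairMul F G]
          push_cast
          rw [Real.log_pow]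
          push_cast
          ring
  have hFW : H p (fun ω => F * W ω)
      = ((F.rank * L : ℕ) : ℝ) * Real.log (Fintype.card 𝔽) := by
    have hfib : ∀ b b' : Matrix (Fin M) (Fin L) 𝔽,
        (∃ v, F * v = b) → (∃ v, F * v = b') →
        Nat.card {v : Matrix (Fin K) (Fin L) 𝔽 // F * v = b}
          = Nat.card {v : Matrix (Fin K) (Fin L) 𝔽 // F * v = b'} := by
      intro b b' hb hb'
      exact add_fibers_card
        (AddMonoidHom.mk' (fun v : Matrix (Fin K) (Fin L) 𝔽 => F * v)
          (fun x y => Matrix.mul_add F x y)) hb hb'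
    calc H p (fun ω => F * W ω)
        = Real.log (Nat.card (Set.range
            (fun v : Matrix (Fin K) (Fin L) 𝔽 => F * v))) :=
          H_uniform_comp hp hp1 W W_unif (fun v => F * v) hfib
      _ = ((F.rank * L : ℕ) : ℝ) * Real.log (Fintype.card 𝔽) := by
          rw [card_range_matMul F]
          push_cast
          rw [Real.log_pow]
          push_cast
          ring
  -- assemble
  have hHc : Hc p (fun ω k => X k ω) W
      = H p (fun ω => ((fun k => X k ω : ∀ k, χ k), W ω)) - H p W := rfl
  rw [hHc]
  have hfin : H p (fun ω => (G * W ω, (fun k => X k ω : ∀ k, χ k), F * W ω))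
      = H p (fun ω => (G * W ω, F * W ω))
        + H p (fun ω => ((fun k => X k ω : ∀ k, χ k), F * W ω))
        - H p (fun ω => F * W ω) := by linarith [hsec]
  have hXF : H p (fun ω => ((fun k => X k ω : ∀ k, χ k), F * W ω))
      = H p (fun ω k => X k ω) := by
    rw [hswap]; linarith [hco]
  have cast1 : (((Matrix.fromRows F G).rank * L : ℕ) : ℝ)
      = ((Matrix.fromRows F G).rank : ℝ) * (L : ℝ) := by push_cast; ring
  have cast2 : ((F.rank * L : ℕ) : ℝ) = (F.rank : ℝ) * (L : ℝ) := by push_cast; ring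
  rw [cast1] at hGF
  rw [cast2] at hFW
  nlinarith [hDP, hfin, hXF, hHX_ge, hGF, hFW]


end SecAgg
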